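/- (Monotone tightening of ULW bounds under assignment refinement.) Let C be a probabilistic circuit over a finite index set V of Boolean variables, and fix a set Y ⊆ V of marginalized variables. Consider two partial assignments where the second refines the first: assigned sets A ⊆ A' ⊆ V \ Y with assignments σ : A → Bool and σ' : A' → Bool such that σ' agrees with σ on A, remaining sets R = V \ (A ∪ Y) and R' = V \ (A' ∪ Y). Let LB, UB be the ULW bounds computed with (A, σ, R, Y) and LB', UB' those computed with (A', σ', R', Y). Then for every node v of C, the refined interval is nested in the original one: LB(v) ≤ LB'(v) and UB'(v) ≤ UB(v). -/

import Mathlib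

/-- A probabilistic circuit over Boolean variables indexed by `V`:
a leaf carries a variable and a function `Bool → ℝ`; a product node a list of
children; a sum node a list of weighted children. -/
inductive PC (V : Type) : Type
  | leaf (i : V) (p : Bool → ℝ) : PC V
  | prod (cs : List (PC V)) : PC V
  | sum (cs : List (ℝ × PC V)) : PC V

namespace PC

variable {V : Type}

/-- Value of a circuit node under a total assignment. -/
def value : PC V → (V → Bool) → ℝ
  | leaf i p, a => p (a i)
  | prod cs, a => (cs.attach.map (fun c => value c.1 a)).prod
  | sum cs, a => (cs.attach.map (fun c => c.1.1 * value c.1.2 a)).sum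
decreasing_by
  · have := List.sizeOf_lt_of_mem c.2
    simp at this ⊢; omega
  · obtain ⟨⟨w, d⟩, hmem⟩ := c
    have := List.sizeOf_lt_of_mem hmem
    simp at this ⊢; omega

/-- Scope of a circuit node. -/
def scope [DecidableEq V] : PC V → Finset V
  | leaf i _ => {i}
  | prod cs => (cs.attach.map (fun c => scope c.1)).foldr (· ∪ ·) ∅
  | sum cs => (cs.attach.map (fun c => scope c.1.2)).foldr (· ∪ ·) ∅
decreasing_by
  · have := List.sizeOf_lt_of_mem c.2
    simp at this ⊢; omega
  · obtain ⟨⟨w, d⟩, hmem⟩ := c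
    have := List.sizeOf_lt_of_mem hmem
    simp at this ⊢; omega

/-- All leaf functions and sum-node weights are nonnegative. -/
inductive Nonneg : PC V → Prop
  | leaf {i : V} {p : Bool → ℝ} : 0 ≤ p true → 0 ≤ p false → Nonneg (.leaf i p)
  | prod {cs : List (PC V)} : (∀ c ∈ cs, Nonneg c) → Nonneg (.prod cs)
  | sum {cs : List (ℝ × PC V)} : (∀ c ∈ cs, 0 ≤ c.1) → (∀ c ∈ cs, Nonneg c.2) →
      Nonneg (.sum cs)

/-- Decomposability: the children of any product node have pairwise disjoint scopes. -/
inductive Decomposable [DecidableEq V] : PC V → Prop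
  | leaf {i : V} {p : Bool → ℝ} : Decomposable (.leaf i p)
  | prod {cs : List (PC V)} : cs.Pairwise (fun c d => Disjoint (scope c) (scope d)) →
      (∀ c ∈ cs, Decomposable c) → Decomposable (.prod cs)
  | sum {cs : List (ℝ × PC V)} : (∀ c ∈ cs, Decomposable c.2) → Decomposable (.sum cs)

/-- Smoothness: the children of any sum node all have the same scope. -/
inductive Smooth [DecidableEq V] : PC V → Prop
  | leaf {i : V} {p : Bool → ℝ} : Smooth (.leaf i p)
  | prod {cs : List (PC V)} : (∀ c ∈ cs, Smooth c) → Smooth (.prod cs)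
  | sum {cs : List (ℝ × PC V)} :
      (∀ c ∈ cs, ∀ d ∈ cs, scope c.2 = scope d.2) →
      (∀ c ∈ cs, Smooth c.2) → Smooth (.sum cs)

/-- `IsNode v C` : `v` occurs as a node of the circuit `C`. -/
inductive IsNode : PC V → PC V → Prop
  | refl (c : PC V) : IsNode c c
  | prod {v c : PC V} {cs : List (PC V)} : c ∈ cs → IsNode v c → IsNode v (.prod cs)
  | sum {v : PC V} {c : ℝ × PC V} {cs : List (ℝ × PC V)} :
      c ∈ cs → IsNode v c.2 → IsNode v (.sum cs)

/-- ULW upper bound, given the assigned set `A` (with assignment `σ`) and the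
marginalized set `Y`; the remaining variables are those in neither `A` nor `Y`. -/
def UB [DecidableEq V] (A Y : Finset V) (σ : V → Bool) : PC V → ℝ
  | leaf i p =>
      if i ∈ Y then 1 else if i ∈ A then p (σ i) else max (p true) (p false)
  | prod cs => (cs.attach.map (fun c => UB A Y σ c.1)).prod
  | sum cs => (cs.attach.map (fun c => c.1.1 * UB A Y σ c.1.2)).sum
decreasing_by
  · have := List.sizeOf_lt_of_mem c.2
    simp at this ⊢; omega
  · obtain ⟨⟨w, d⟩, hmem⟩ := c
    have := List.sizeOf_lt_of_mem hmem
    simp at this ⊢; omega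

/-- ULW lower bound. -/
def LB [DecidableEq V] (A Y : Finset V) (σ : V → Bool) : PC V → ℝ
  | leaf i p =>
      if i ∈ Y then 1 else if i ∈ A then p (σ i) else min (p true) (p false)
  | prod cs => (cs.attach.map (fun c => LB A Y σ c.1)).prod
  | sum cs => (cs.attach.map (fun c => c.1.1 * LB A Y σ c.1.2)).sum
decreasing_by
  · have := List.sizeOf_lt_of_mem c.2
    simp at this ⊢; omega
  · obtain ⟨⟨w, d⟩, hmem⟩ := c
    have := List.sizeOf_lt_of_mem hmem
    simp at this ⊢; omega

/-- The total assignment agreeing with `τ` on the remaining variables `R`, with `y`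
on the marginalized variables `Y`, and with `σ` elsewhere (in particular on the
assigned variables). -/
def combine [DecidableEq V] (R Y : Finset V) (σ : V → Bool)
    (τ : ↥R → Bool) (y : ↥Y → Bool) : V → Bool :=
  fun i => if h : i ∈ R then τ ⟨i, h⟩ else if h : i ∈ Y then y ⟨i, h⟩ else σ i

end PC

/-!
A newly assigned leaf value `p (σ' i)` lies between `min (p true) (p false)` and
`max (p true) (p false)`, so every leaf interval shrinks under refinement. Products of
nonnegative factors and sums with nonnegative weights are monotone in their arguments, and
all ULW bounds of a nonnegative circuit are nonnegative, so the nesting propagates upwards.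
-/

namespace PC

variable {V : Type}

theorem Nonneg.of_isNode {v C : PC V} (h : IsNode v C) (hC : C.Nonneg) : v.Nonneg := by
  induction h with
  | refl => exact hC
  | prod hmem _ ih => cases hC with | prod h => exact ih (h _ hmem)
  | sum hmem _ ih => cases hC with | sum _ h => exact ih (h _ hmem)

theorem min_le_apply (p : Bool → ℝ) (b : Bool) : min (p true) (p false) ≤ p b := by
  cases b
  exacts [min_le_right _ _, min_le_left _ _]

theorem apply_le_max (p : Bool → ℝ) (b : Bool) : p b ≤ max (p true) (p false) := by
  cases b
  exacts [le_max_right _ _, le_max_left _ _]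

variable [DecidableEq V] {A A' Y : Finset V} {σ σ' : V → Bool}

theorem LB_nonneg {v : PC V} (hv : v.Nonneg) : 0 ≤ LB A Y σ v := by
  induction hv with
  | leaf ht hf =>
    rw [LB]
    split_ifs
    exacts [zero_le_one, by cases σ _ <;> assumption, le_min ht hf]
  | prod _ ih =>
    rw [LB]
    exact List.prod_nonneg <| List.forall_mem_map.2 fun c _ => ih c.1 c.2
  | sum hw _ ih =>
    rw [LB]
    exact List.sum_nonneg <| List.forall_mem_map.2 fun c _ =>
      mul_nonneg (hw c.1 c.2) (ih c.1 c.2)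

theorem UB_nonneg {v : PC V} (hv : v.Nonneg) : 0 ≤ UB A Y σ v := by
  induction hv with
  | leaf ht _ =>
    rw [UB]
    split_ifs
    exacts [zero_le_one, by cases σ _ <;> assumption, ht.trans (le_max_left _ _)]
  | prod _ ih =>
    rw [UB]
    exact List.prod_nonneg <| List.forall_mem_map.2 fun c _ => ih c.1 c.2
  | sum hw _ ih =>
    rw [UB]
    exact List.sum_nonneg <| List.forall_mem_map.2 fun c _ =>
      mul_nonneg (hw c.1 c.2) (ih c.1 c.2)

theorem LB_le_LB_of_subset (hA : A ⊆ A') (hσ : ∀ i ∈ A, σ i = σ' i) {v : PC V}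
    (hv : v.Nonneg) : LB A Y σ v ≤ LB A' Y σ' v := by
  induction hv with
  | @leaf i p _ _ =>
    rw [LB, LB]
    split_ifs with hY hiA hiA'
    · rfl
    · rw [hσ i hiA]
    · exact absurd (hA hiA) hiA'
    · exact min_le_apply p _
    · rfl
  | prod hcs ih =>
    rw [LB, LB]
    exact List.prod_map_le_prod_map₀ _ _ (fun c _ => LB_nonneg (hcs c.1 c.2))
      fun c _ => ih c.1 c.2
  | sum hw _ ih =>
    rw [LB, LB]
    exact List.sum_le_sum fun c _ => mul_le_mul_of_nonneg_left (ih c.1 c.2) (hw c.1 c.2)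

theorem UB_le_UB_of_subset (hA : A ⊆ A') (hσ : ∀ i ∈ A, σ i = σ' i) {v : PC V}
    (hv : v.Nonneg) : UB A' Y σ' v ≤ UB A Y σ v := by
  induction hv with
  | @leaf i p _ _ =>
    rw [UB, UB]
    split_ifs with hY hiA' hiA
    · rfl
    · rw [hσ i hiA]
    · exact apply_le_max p _
    · exact absurd (hA ‹i ∈ A›) hiA'
    · rfl
  | prod hcs ih =>
    rw [UB, UB]
    exact List.prod_map_le_prod_map₀ _ _ (fun c _ => UB_nonneg (hcs c.1 c.2))
      fun c _ => ih c.1 c.2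
  | sum hw _ ih =>
    rw [UB, UB]
    exact List.sum_le_sum fun c _ => mul_le_mul_of_nonneg_left (ih c.1 c.2) (hw c.1 c.2)

end PC

theorem ulw_bounds_monotone_refinement_general {V : Type} [DecidableEq V]
    (C : PC V) (hNonneg : C.Nonneg)
    (Y A A' : Finset V) (σ σ' : V → Bool)
    (hAA' : A ⊆ A')
    (hagree : ∀ i ∈ A, σ i = σ' i)
    (v : PC V) (hv : PC.IsNode v C) :
    PC.LB A Y σ v ≤ PC.LB A' Y σ' v ∧ PC.UB A' Y σ' v ≤ PC.UB A Y σ v := by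
  have hvNonneg := PC.Nonneg.of_isNode hv hNonneg
  exact ⟨PC.LB_le_LB_of_subset hAA' hagree hvNonneg, PC.UB_le_UB_of_subset hAA' hagree hvNonneg⟩

/-- **Monotone tightening of ULW bounds under assignment refinement.** If the partial
assignment `(A', σ')` refines `(A, σ)` (i.e. `A ⊆ A' ⊆ V \ Y` and `σ'` agrees with `σ`
on `A`), then at every node of the circuit the refined ULW interval is nested in the
original one: `LB(v) ≤ LB'(v)` and `UB'(v) ≤ UB(v)`. -/
theorem ulw_bounds_monotone_refinement {V : Type} [Fintype V] [DecidableEq V]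
    (C : PC V) (hNonneg : C.Nonneg)
    (Y A A' : Finset V) (σ σ' : V → Bool)
    (hAA' : A ⊆ A') (hA'Y : Disjoint A' Y)
    (hagree : ∀ i ∈ A, σ i = σ' i)
    (v : PC V) (hv : PC.IsNode v C) :
    PC.LB A Y σ v ≤ PC.LB A' Y σ' v ∧ PC.UB A' Y σ' v ≤ PC.UB A Y σ v :=
  ulw_bounds_monotone_refinement_general C hNonneg Y A A' σ σ' hAA' hagree v hv
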